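/- Let k_z ≠ 0 and F smooth with F_ss + F_yy + k_z² F = 0. Then p = sinh(k_z z)·F(x−Vt,y) + (−(β/2)z² + (β/2)HMz − V)·y satisfies the Charney–Obukhov equation ∂_t Δp + ∂_x p ∂_y Δp − ∂_y p ∂_x Δp + β ∂_x p = 0 for any constants M, H. -/

import Mathlib

open Real

noncomputable section

/-- Partial derivative in `t` of `p t x y z`. -/
def pdt (p : ℝ → ℝ → ℝ → ℝ → ℝ) (t x y z : ℝ) : ℝ := deriv (fun t' => p t' x y z) t
/-- Partial derivative in `x`. -/
def pdx (p : ℝ → ℝ → ℝ → ℝ → ℝ) (t x y z : ℝ) : ℝ := deriv (fun x' => p t x' y z) x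
/-- Partial derivative in `y`. -/
def pdy (p : ℝ → ℝ → ℝ → ℝ → ℝ) (t x y z : ℝ) : ℝ := deriv (fun y' => p t x y' z) y
/-- Partial derivative in `z`. -/
def pdz (p : ℝ → ℝ → ℝ → ℝ → ℝ) (t x y z : ℝ) : ℝ := deriv (fun z' => p t x y z') z

/-- Spatial Laplacian in `(x, y, z)`. -/
def lap3d (p : ℝ → ℝ → ℝ → ℝ → ℝ) (t x y z : ℝ) : ℝ :=
  pdx (pdx p) t x y z + pdy (pdy p) t x y z + pdz (pdz p) t x y z

/-- Charney–Obukhov operator. -/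
def CO (β : ℝ) (p : ℝ → ℝ → ℝ → ℝ → ℝ) (t x y z : ℝ) : ℝ :=
  pdt (lap3d p) t x y z + pdx p t x y z * pdy (lap3d p) t x y z
    - pdy p t x y z * pdx (lap3d p) t x y z + β * pdx p t x y z

/-- Boundary condition operator `p_{zt} − p_y p_{zx} + p_x p_{zy}`. -/
def Bop (p : ℝ → ℝ → ℝ → ℝ → ℝ) (t x y z : ℝ) : ℝ :=
  pdt (pdz p) t x y z - pdy p t x y z * pdx (pdz p) t x y z
    + pdx p t x y z * pdy (pdz p) t x y z

/-- Partial derivative in the first variable `s` of a two-variable function. -/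
def dS (F : ℝ → ℝ → ℝ) (s y : ℝ) : ℝ := deriv (fun s' => F s' y) s
/-- Partial derivative in the second variable `y` of a two-variable function. -/
def dY (F : ℝ → ℝ → ℝ) (s y : ℝ) : ℝ := deriv (fun y' => F s y') y

/-- Smoothness of a two-variable function. -/
def Smooth2 (F : ℝ → ℝ → ℝ) : Prop := ContDiff ℝ (⊤ : ℕ∞) (fun q : ℝ × ℝ => F q.1 q.2)


lemma hdS (F : ℝ → ℝ → ℝ) (hF : Smooth2 F) (s y : ℝ) :
    HasDerivAt (fun s' => F s' y) (dS F s y) s := by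
  have : Differentiable ℝ (fun s' => F s' y) :=
    (hF.comp (contDiff_id.prodMk contDiff_const)).differentiable (by simp)
  exact (this s).hasDerivAt

lemma hdY (F : ℝ → ℝ → ℝ) (hF : Smooth2 F) (s y : ℝ) :
    HasDerivAt (fun y' => F s y') (dY F s y) y := by
  have : Differentiable ℝ (fun y' => F s y') :=
    (hF.comp (contDiff_const.prodMk contDiff_id)).differentiable (by simp)
  exact (this y).hasDerivAt

lemma smooth_dS (F : ℝ → ℝ → ℝ) (hF : Smooth2 F) : Smooth2 (dS F) := by
  have hfd : ContDiff ℝ (⊤ : ℕ∞) (fun q : ℝ × ℝ => fderiv ℝ (fun q : ℝ × ℝ => F q.1 q.2) q) :=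
    hF.fderiv_right (by simp)
  have key : (fun q : ℝ × ℝ => dS F q.1 q.2)
      = fun q : ℝ × ℝ => fderiv ℝ (fun q : ℝ × ℝ => F q.1 q.2) q (1, 0) := by
    funext q
    obtain ⟨s, y⟩ := q
    have hG : HasFDerivAt (fun q : ℝ × ℝ => F q.1 q.2)
        (fderiv ℝ (fun q : ℝ × ℝ => F q.1 q.2) (s, y)) (s, y) :=
      (hF.differentiable (by simp) (s, y)).hasFDerivAt
    have hin : HasDerivAt (fun s' : ℝ => ((s', y) : ℝ × ℝ)) (1, 0) s :=
      (hasDerivAt_id s).prodMk (hasDerivAt_const s y)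
    have := hG.comp_hasDerivAt s hin
    exact (this.deriv :)
  rw [Smooth2, key]
  exact hfd.clm_apply contDiff_const

lemma smooth_dY (F : ℝ → ℝ → ℝ) (hF : Smooth2 F) : Smooth2 (dY F) := by
  have hfd : ContDiff ℝ (⊤ : ℕ∞) (fun q : ℝ × ℝ => fderiv ℝ (fun q : ℝ × ℝ => F q.1 q.2) q) :=
    hF.fderiv_right (by simp)
  have key : (fun q : ℝ × ℝ => dY F q.1 q.2)
      = fun q : ℝ × ℝ => fderiv ℝ (fun q : ℝ × ℝ => F q.1 q.2) q (0, 1) := by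
    funext q
    obtain ⟨s, y⟩ := q
    have hG : HasFDerivAt (fun q : ℝ × ℝ => F q.1 q.2)
        (fderiv ℝ (fun q : ℝ × ℝ => F q.1 q.2) (s, y)) (s, y) :=
      (hF.differentiable (by simp) (s, y)).hasFDerivAt
    have hin : HasDerivAt (fun y' : ℝ => ((s, y') : ℝ × ℝ)) (0, 1) y :=
      (hasDerivAt_const y s).prodMk (hasDerivAt_id y)
    have := hG.comp_hasDerivAt y hin
    exact (this.deriv :)
  rw [Smooth2, key]
  exact hfd.clm_apply contDiff_const

/-- Solution 6 satisfies the Charney–Obukhov equation. -/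
theorem stmt_11 (F : ℝ → ℝ → ℝ) (kz V β M H : ℝ)
    (hkz : kz ≠ 0) (hF : Smooth2 F)
    (hHelm : ∀ s y, dS (dS F) s y + dY (dY F) s y + kz ^ 2 * F s y = 0) :
    ∀ t x y z, CO β
      (fun t x y z => Real.sinh (kz * z) * F (x - V * t) y
        + (-(β / 2) * z ^ 2 + (β / 2) * H * M * z - V) * y)
      t x y z = 0 := by
  set P : ℝ → ℝ → ℝ → ℝ → ℝ := fun t x y z => Real.sinh (kz * z) * F (x - V * t) y
      + (-(β / 2) * z ^ 2 + (β / 2) * H * M * z - V) * y with hP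
  -- first x-derivative
  have hx : pdx P = fun t x y z => Real.sinh (kz * z) * dS F (x - V * t) y := by
    funext t x y z
    have h1 : HasDerivAt (fun x' => F (x' - V * t) y) (dS F (x - V * t) y) x := by
      simpa [Function.comp_def] using (hdS F hF (x - V * t) y).comp x ((hasDerivAt_id x).sub_const (V * t))
    exact ((h1.const_mul (Real.sinh (kz * z))).add_const
        ((-(β / 2) * z ^ 2 + (β / 2) * H * M * z - V) * y)).deriv
  have hxx : ∀ t x y z, pdx (pdx P) t x y z
      = Real.sinh (kz * z) * dS (dS F) (x - V * t) y := by
    intro t x y z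
    rw [hx]
    have h1 : HasDerivAt (fun x' => dS F (x' - V * t) y) (dS (dS F) (x - V * t) y) x := by
      simpa [Function.comp_def] using (hdS (dS F) (smooth_dS F hF) (x - V * t) y).comp x
        ((hasDerivAt_id x).sub_const (V * t))
    exact (h1.const_mul (Real.sinh (kz * z))).deriv
  -- first y-derivative
  have hy : pdy P = fun t x y z => Real.sinh (kz * z) * dY F (x - V * t) y
      + (-(β / 2) * z ^ 2 + (β / 2) * H * M * z - V) := by
    funext t x y z
    have h2 : HasDerivAt (fun y' => P t x y' z)
        (Real.sinh (kz * z) * dY F (x - V * t) y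
          + (-(β / 2) * z ^ 2 + (β / 2) * H * M * z - V)) y := by
      have := ((hdY F hF (x - V * t) y).const_mul (Real.sinh (kz * z))).add
        ((hasDerivAt_id y).const_mul (-(β / 2) * z ^ 2 + (β / 2) * H * M * z - V))
      simpa [hP, mul_comm, Pi.add_def] using this
    exact h2.deriv
  have hyy : ∀ t x y z, pdy (pdy P) t x y z
      = Real.sinh (kz * z) * dY (dY F) (x - V * t) y := by
    intro t x y z
    rw [hy]
    have h2 : HasDerivAt (fun y' => Real.sinh (kz * z) * dY F (x - V * t) y'
        + (-(β / 2) * z ^ 2 + (β / 2) * H * M * z - V))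
        (Real.sinh (kz * z) * dY (dY F) (x - V * t) y) y :=
      ((hdY (dY F) (smooth_dY F hF) (x - V * t) y).const_mul (Real.sinh (kz * z))).add_const _
    exact h2.deriv
  -- z-derivatives
  have hz : pdz P = fun t x y z => kz * Real.cosh (kz * z) * F (x - V * t) y
      + (-β * z + β / 2 * H * M) * y := by
    funext t x y z
    have h1 : HasDerivAt (fun z' => Real.sinh (kz * z')) (kz * Real.cosh (kz * z)) z := by
      simpa [mul_comm, Function.comp_def] using (Real.hasDerivAt_sinh (kz * z)).comp z
        ((hasDerivAt_id z).const_mul kz)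
    have h2 : HasDerivAt (fun z' => -(β / 2) * z' ^ 2 + (β / 2) * H * M * z' - V)
        (-β * z + β / 2 * H * M) z := by
      have := (((hasDerivAt_pow 2 z).const_mul (-(β / 2))).add
        ((hasDerivAt_id z).const_mul ((β / 2) * H * M))).sub_const V
      refine this.congr_deriv ?_
      ring
    have h3 : HasDerivAt (fun z' => P t x y z')
        (kz * Real.cosh (kz * z) * F (x - V * t) y + (-β * z + β / 2 * H * M) * y) z := by
      simpa [hP, Pi.add_def] using (h1.mul_const (F (x - V * t) y)).add (h2.mul_const y)
    exact h3.deriv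
  have hzz : ∀ t x y z, pdz (pdz P) t x y z
      = kz ^ 2 * Real.sinh (kz * z) * F (x - V * t) y - β * y := by
    intro t x y z
    rw [hz]
    have h1 : HasDerivAt (fun z' => Real.cosh (kz * z')) (kz * Real.sinh (kz * z)) z := by
      simpa [mul_comm, Function.comp_def] using (Real.hasDerivAt_cosh (kz * z)).comp z
        ((hasDerivAt_id z).const_mul kz)
    have h2 : HasDerivAt (fun z' => -β * z' + β / 2 * H * M) (-β) z := by
      simpa using ((hasDerivAt_id z).const_mul (-β)).add_const (β / 2 * H * M)
    have h3 : HasDerivAt (fun z' => kz * Real.cosh (kz * z') * F (x - V * t) y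
        + (-β * z' + β / 2 * H * M) * y)
        (kz ^ 2 * Real.sinh (kz * z) * F (x - V * t) y - β * y) z := by
      have := (((h1.const_mul kz).mul_const (F (x - V * t) y))).add (h2.mul_const y)
      refine this.congr_deriv ?_
      ring
    exact h3.deriv
  -- Laplacian is -β y
  have hlap : lap3d P = fun _ _ y _ => -β * y := by
    funext t x y z
    have := hHelm (x - V * t) y
    simp only [lap3d, hxx, hyy, hzz]
    linear_combination Real.sinh (kz * z) * this
  intro t x y z
  have hA : pdt (lap3d P) t x y z = 0 := by
    rw [hlap]; simp [pdt]
  have hB : pdx (lap3d P) t x y z = 0 := by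
    rw [hlap]; simp [pdx]
  have hC : pdy (lap3d P) t x y z = -β := by
    rw [hlap]
    show deriv (fun y' => -β * y') y = -β
    simpa using ((hasDerivAt_id y).const_mul (-β)).deriv
  simp only [CO, hA, hB, hC]
  ring
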